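/- Explicit regret bound for the exponentially weighted average forecaster: let l : A × B → [0,1] be convex in its first argument, η > 0, and define p_t^i = e^{−η L_t^i/√n} / Σⱼ e^{−η L_t^j/√n} where L_t^i = Σ_{s=0}^{t−1} l(f_s^i, b_s). Then for all sequences (f_t) in A^N and (b_t) in B, Σ_{t=0}^{n−1} l(⟨p_t,f_t⟩, b_t) − min_i Σ_{t=0}^{n−1} l(f_t^i, b_t) ≤ (η/2 + (ln N)/η)√n. -/

import Mathlib

/-!
With `c = η / √n` and cumulative losses `Lₜⁱ`, the potential `Φₜ = log ∑ᵢ exp (-c Lₜⁱ)` starts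
at `log N`, stays above `-c Lₙⁱ` for every expert `i`, and drops in round `t` by at least
`c ⟨pₜ, ℓₜ⟩ - c² / 2`, because `exp (-x) ≤ 1 - x + x² / 2` for losses in `[0, 1]` and
`1 + y ≤ exp y`. Telescoping bounds the regret of the mixed losses `⟨pₜ, ℓₜ⟩` by
`log N / c + n c / 2`, and Jensen's inequality for the convex loss passes to the loss of the
averaged prediction `∑ⱼ pₜʲ fₜʲ`.
-/

open Real Finset

theorem exp_neg_le_quadratic_of_nonneg {x : ℝ} (hx : 0 ≤ x) :
    exp (-x) ≤ 1 - x + x ^ 2 / 2 := by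
  rw [exp_neg, inv_le_iff_one_le_mul₀ (exp_pos x)]
  -- `(1 - x + x²/2)(1 + x + x²/2) = 1 + x⁴/4`
  calc (1 : ℝ) ≤ (1 - x + x ^ 2 / 2) * (1 + x + x ^ 2 / 2) := by
        nlinarith [pow_two_nonneg (x ^ 2)]
    _ ≤ (1 - x + x ^ 2 / 2) * exp x := by
      gcongr
      · nlinarith [sq_nonneg (x - 1)]
      · exact quadratic_le_exp_of_nonneg hx

section
variable {ι : Type*} [Fintype ι]

theorem sum_mul_exp_neg_le {p x : ι → ℝ} (hp : ∀ i, 0 ≤ p i) (hp1 : ∑ i, p i = 1)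
    (hx : ∀ i, x i ∈ Set.Icc (0 : ℝ) 1) {c : ℝ} (hc : 0 ≤ c) :
    ∑ i, p i * exp (-(c * x i)) ≤ exp (-(c * ∑ i, p i * x i) + c ^ 2 / 2) := by
  have hround : ∀ i, exp (-(c * x i)) ≤ 1 - c * x i + c ^ 2 / 2 := fun i => by
    have hcx : c * x i ≤ c := mul_le_of_le_one_right hc (hx i).2
    have := exp_neg_le_quadratic_of_nonneg (mul_nonneg hc (hx i).1)
    nlinarith [mul_nonneg hc (hx i).1]
  calc ∑ i, p i * exp (-(c * x i)) ≤ ∑ i, p i * (1 - c * x i + c ^ 2 / 2) :=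
        sum_le_sum fun i _ => mul_le_mul_of_nonneg_left (hround i) (hp i)
    _ = (1 + c ^ 2 / 2) * ∑ i, p i - c * ∑ i, p i * x i := by
        rw [mul_sum, mul_sum, ← sum_sub_distrib]
        exact sum_congr rfl fun i _ => by ring
    _ = -(c * ∑ i, p i * x i) + c ^ 2 / 2 + 1 := by rw [hp1]; ring
    _ ≤ _ := add_one_le_exp _

noncomputable def expWeights (c : ℝ) (L : ι → ℝ) (i : ι) : ℝ :=
  exp (-(c * L i)) / ∑ j, exp (-(c * L j))

theorem expWeights_nonneg (c : ℝ) (L : ι → ℝ) (i : ι) : 0 ≤ expWeights c L i := by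
  unfold expWeights; positivity

theorem sum_expWeights [Nonempty ι] (c : ℝ) (L : ι → ℝ) : ∑ i, expWeights c L i = 1 := by
  simp only [expWeights, ← sum_div]
  exact div_self (sum_pos (fun i _ => exp_pos _) univ_nonempty).ne'

theorem log_sum_exp_neg_add_le [Nonempty ι] (L : ι → ℝ) {x : ι → ℝ}
    (hx : ∀ i, x i ∈ Set.Icc (0 : ℝ) 1) {c : ℝ} (hc : 0 ≤ c) :
    log (∑ i, exp (-(c * (L i + x i)))) ≤
      log (∑ i, exp (-(c * L i))) - c * ∑ i, expWeights c L i * x i + c ^ 2 / 2 := by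
  have hW : 0 < ∑ i, exp (-(c * L i)) := sum_pos (fun i _ => exp_pos _) univ_nonempty
  have hsplit : ∑ i, exp (-(c * (L i + x i))) =
      (∑ i, exp (-(c * L i))) * ∑ i, expWeights c L i * exp (-(c * x i)) := by
    simp only [mul_sum, expWeights]
    refine sum_congr rfl fun i _ => ?_
    rw [mul_add, neg_add, exp_add]
    field_simp
  have hround := sum_mul_exp_neg_le (expWeights_nonneg c L) (sum_expWeights c L) hx hc
  calc log (∑ i, exp (-(c * (L i + x i))))
      ≤ log ((∑ i, exp (-(c * L i))) * exp (-(c * ∑ i, expWeights c L i * x i) + c ^ 2 / 2)) :=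
        log_le_log (sum_pos (fun i _ => exp_pos _) univ_nonempty)
          (hsplit ▸ mul_le_mul_of_nonneg_left hround hW.le)
    _ = _ := by rw [log_mul hW.ne' (exp_pos _).ne', log_exp]; ring

def cumLoss (ℓ : ℕ → ι → ℝ) (t : ℕ) (i : ι) : ℝ := ∑ s ∈ range t, ℓ s i

theorem expWeights_regret_le [Nonempty ι] {ℓ : ℕ → ι → ℝ}
    (hℓ : ∀ t i, ℓ t i ∈ Set.Icc (0 : ℝ) 1) {c : ℝ} (hc : 0 < c) (n : ℕ) (i : ι) :
    ∑ t ∈ range n, ∑ j, expWeights c (cumLoss ℓ t) j * ℓ t j - cumLoss ℓ n i ≤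
      log (Fintype.card ι) / c + n * c / 2 := by
  set Φ : ℕ → ℝ := fun t => log (∑ j, exp (-(c * cumLoss ℓ t j))) with hΦ
  have hstep : ∀ t, Φ (t + 1) - Φ t ≤
      -(c * ∑ j, expWeights c (cumLoss ℓ t) j * ℓ t j) + c ^ 2 / 2 := fun t => by
    have := log_sum_exp_neg_add_le (cumLoss ℓ t) (hℓ t) hc.le
    simp only [hΦ, cumLoss, sum_range_succ] at this ⊢
    linarith
  have hΦ0 : Φ 0 = log (Fintype.card ι) := by simp [hΦ, cumLoss]
  have hΦn : -(c * cumLoss ℓ n i) ≤ Φ n := by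
    rw [hΦ, ← log_exp (-(c * cumLoss ℓ n i))]
    exact log_le_log (exp_pos _) (single_le_sum (f := fun j => exp (-(c * cumLoss ℓ n j)))
      (fun j _ => (exp_pos _).le) (mem_univ i))
  have htel : Φ n - Φ 0 ≤
      ∑ t ∈ range n, (-(c * ∑ j, expWeights c (cumLoss ℓ t) j * ℓ t j) + c ^ 2 / 2) := by
    rw [← sum_range_sub]
    exact sum_le_sum fun t _ => hstep t
  rw [sum_add_distrib, sum_const, card_range, nsmul_eq_mul, sum_neg_distrib, ← mul_sum]
    at htel
  calc _ ≤ (log (Fintype.card ι) + n * (c ^ 2 / 2)) / c := by rw [le_div_iff₀ hc]; linarith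
    _ = _ := by field_simp
end

theorem statement_16_general {V B : Type*} [AddCommGroup V] [Module ℝ V] {N n : ℕ}
    (hN : 0 < N)
    (A : Set V) (l : V → B → ℝ)
    (hl01 : ∀ a ∈ A, ∀ b, l a b ∈ Set.Icc (0 : ℝ) 1)
    (hconv : ∀ b, ConvexOn ℝ A (fun a => l a b))
    (η : ℝ) (hη : 0 < η)
    (f : ℕ → Fin N → V) (hf : ∀ t i, f t i ∈ A) (b : ℕ → B)
    (L : ℕ → Fin N → ℝ) (hL : ∀ t i, L t i = ∑ s ∈ Finset.range t, l (f s i) (b s))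
    (p : ℕ → Fin N → ℝ)
    (hp : ∀ t i, p t i = Real.exp (-η * L t i / Real.sqrt n) /
      ∑ j, Real.exp (-η * L t j / Real.sqrt n)) :
    (∑ t ∈ Finset.range n, l (∑ j, p t j • f t j) (b t)) -
      (Finset.univ.inf' (Finset.univ_nonempty_iff.mpr (Fin.pos_iff_nonempty.mp hN))
        (fun i => ∑ t ∈ Finset.range n, l (f t i) (b t)))
      ≤ (η / 2 + Real.log N / η) * Real.sqrt n := by
  rcases n.eq_zero_or_pos with rfl | hn
  · simp
  have : Nonempty (Fin N) := Fin.pos_iff_nonempty.mp hN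
  have hsqrt : 0 < √(n : ℝ) := sqrt_pos.mpr (by positivity)
  set ℓ : ℕ → Fin N → ℝ := fun t i => l (f t i) (b t)
  have hp_eq : ∀ t, p t = expWeights (η / √n) (cumLoss ℓ t) := fun t => by
    funext i
    simp only [hp, expWeights, cumLoss, ℓ, ← hL, neg_mul, neg_div, div_mul_eq_mul_div]
  have hjensen : ∀ t, l (∑ j, p t j • f t j) (b t) ≤ ∑ j, p t j * ℓ t j := fun t => by
    rw [hp_eq]
    exact (hconv (b t)).map_sum_le (fun j _ => expWeights_nonneg _ _ j) (sum_expWeights _ _)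
      fun j _ => hf t j
  have hrate :
      Real.log N / (η / √n) + n * (η / √n) / 2 = (η / 2 + Real.log N / η) * √n := by
    field_simp
    rw [sq_sqrt n.cast_nonneg]
    ring
  have hregret := expWeights_regret_le (fun t i => hl01 _ (hf t i) (b t)) (div_pos hη hsqrt) n
  rw [Fintype.card_fin, hrate] at hregret
  rw [sub_le_comm]
  refine le_inf' _ _ fun i _ => ?_
  calc _ ≤ ∑ t ∈ range n, ∑ j, p t j * ℓ t j - (η / 2 + Real.log N / η) * √n := by
        gcongr with t; exact hjensen t
    _ ≤ cumLoss ℓ n i := by simp only [hp_eq]; linarith [hregret i]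

/-- Explicit regret bound for the exponentially weighted average
forecaster: with `l : A × B → [0,1]` convex in its first argument, `η > 0` and
weights `p_tⁱ = e^{−η L_tⁱ/√n}/∑ⱼ e^{−η L_tʲ/√n}`, `L_tⁱ = ∑_{s<t} l(f_sⁱ,b_s)`,
the regret satisfies `R_n ≤ (η/2 + (ln N)/η)√n`. -/
theorem statement_16 {V B : Type*} [AddCommGroup V] [Module ℝ V] {N n : ℕ}
    (hN : 0 < N) (hn : 0 < n)
    (A : Set V) (hA : Convex ℝ A) (l : V → B → ℝ)
    (hl01 : ∀ a ∈ A, ∀ b, l a b ∈ Set.Icc (0 : ℝ) 1)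
    (hconv : ∀ b, ConvexOn ℝ A (fun a => l a b))
    (η : ℝ) (hη : 0 < η)
    (f : ℕ → Fin N → V) (hf : ∀ t i, f t i ∈ A) (b : ℕ → B)
    (L : ℕ → Fin N → ℝ) (hL : ∀ t i, L t i = ∑ s ∈ Finset.range t, l (f s i) (b s))
    (p : ℕ → Fin N → ℝ)
    (hp : ∀ t i, p t i = Real.exp (-η * L t i / Real.sqrt n) /
      ∑ j, Real.exp (-η * L t j / Real.sqrt n)) :
    (∑ t ∈ Finset.range n, l (∑ j, p t j • f t j) (b t)) -
      (Finset.univ.inf' (Finset.univ_nonempty_iff.mpr (Fin.pos_iff_nonempty.mp hN))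
        (fun i => ∑ t ∈ Finset.range n, l (f t i) (b t)))
      ≤ (η / 2 + Real.log N / η) * Real.sqrt n :=
  statement_16_general hN A l hl01 hconv η hη f hf b L hL p hp
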